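/- For every integer d ≥ 1, every ζ ∈ 𝒮, every even integer M ≥ 2, every localization datum L in Λ(M), and all x,y ∈ Λ(M): ∑_{z∈Λ(M)} F_ζ(d^Λ_L(x,z))·F_ζ(d^Λ_L(z,y)) ≤ 2^{d+1}·‖F‖_Γ·F_ζ(d^Λ_L(x,y)). (Second inequality of Lemma B.2.) -/

import Mathlib

open scoped BigOperators

/-- `F r = (1+r)^{-(d+1)}`. -/
noncomputable def Ffun (d : ℕ) (r : ℝ) : ℝ := ((1 + r) ^ (d + 1))⁻¹

/-- ℓ¹ norm on `ℤ^d`, valued in `ℕ`. -/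
def l1norm {d : ℕ} (y : Fin d → ℤ) : ℕ := ∑ j, (y j).natAbs

/-- `‖F‖_Γ := ∑_{y ∈ ℤ^d} F(‖y‖₁)`. -/
noncomputable def FnormGamma (d : ℕ) : ℝ := ∑' y : Fin d → ℤ, Ffun d (l1norm y)

/-- The quotient ℓ¹-metric on `ℤ/Mℤ`: `min_{k∈ℤ} |b + kM|` where `b` is any lift of `v - u`. -/
def torusD (M : ℕ) (u v : ZMod M) : ℕ := min (v - u).val (M - (v - u).val)

/-- The quotient ℓ¹-metric `d^Λ` on the discrete torus `Λ(M) = (ℤ/Mℤ)^d`. -/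
def dTorus {M d : ℕ} (x y : Fin d → ZMod M) : ℕ := ∑ j, torusD M (x j) (y j)

/-- `dist(x, L)` for a localization datum `L = (ℓ, l)`. -/
def distLoc {M d : ℕ} (ℓ : Fin d → Bool) (l : Fin d → ZMod M) (x : Fin d → ZMod M) : ℕ :=
  ∑ j, if ℓ j then torusD M (x j) (l j) else 0

/-- The weighted "metric" `d^Λ_L(x,y) = d^Λ(x,y) + dist(x,L) + dist(y,L)`. -/
def dTorusL {M d : ℕ} (ℓ : Fin d → Bool) (l : Fin d → ZMod M) (x y : Fin d → ZMod M) : ℕ :=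
  dTorus x y + distLoc ℓ l x + distLoc ℓ l y

/-- The set `𝒮` of weight functions: positive, bounded, non-increasing, log-superadditive
functions on `[0,∞)` decaying faster than any inverse power. -/
def InS (ζ : ℝ → ℝ) : Prop :=
  (∀ r : ℝ, 0 ≤ r → 0 < ζ r) ∧
  BddAbove (ζ '' Set.Ici (0 : ℝ)) ∧
  (∀ r s : ℝ, 0 ≤ r → r ≤ s → ζ s ≤ ζ r) ∧
  (∀ r s : ℝ, 0 ≤ r → 0 ≤ s → ζ r * ζ s ≤ ζ (r + s)) ∧
  (∀ n : ℕ, ∃ C : ℝ, ∀ r : ℝ, 0 ≤ r → r ^ n * ζ r ≤ C)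

/-- `F_ζ r = ζ(r)/(1+r)^{d+1}`. -/
noncomputable def Fzeta (d : ℕ) (ζ : ℝ → ℝ) (r : ℝ) : ℝ := ζ r * ((1 + r) ^ (d + 1))⁻¹

/-! The integrand is bounded pointwise by the quasi-triangle inequality
`F_ζ(a) F_ζ(b) ≤ 2^d F_ζ(c) (F(a) + F(b))` for `c ≤ a + b`, which combines the
supermultiplicativity of `ζ` with `(1 + c)^{d+1} ≤ 2^d ((1 + a)^{d+1} + (1 + b)^{d+1})`.
Since `d^Λ_L ≥ d^Λ` and `F` is decreasing, each of the two resulting sums over the torus is at most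
`∑_z F(d^Λ(x,z))`, and choosing minimal representatives embeds the torus into `ℤ^d` isometrically
around `x`, so this sum is at most `‖F‖_Γ`. -/

lemma summable_inv_one_add_natAbs_rpow {p : ℝ} (hp : 1 < p) :
    Summable fun n : ℤ => ((1 + (n.natAbs : ℝ)) ^ p)⁻¹ := by
  have hnat : Summable fun n : ℕ => ((1 + (n : ℝ)) ^ p)⁻¹ := by
    refine ((Real.summable_one_div_nat_add_rpow 1 p).mpr hp).congr fun n => ?_
    rw [one_div, abs_of_nonneg (by positivity), add_comm]
  exact .of_nat_of_neg (hnat.congr fun n => by simp) (hnat.congr fun n => by simp)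

lemma summable_fin_pi_prod {α : Type*} {f : α → ℝ} (hf : Summable f) (hf0 : 0 ≤ f) :
    ∀ k : ℕ, Summable fun y : Fin k → α => ∏ j, f (y j)
  | 0 => .of_finite
  | k + 1 => by
    rw [← (Fin.consEquiv fun _ => α).summable_iff]
    refine (hf.mul_of_nonneg (summable_fin_pi_prod hf hf0 k) hf0
      fun y => Finset.prod_nonneg fun j _ => hf0 _).congr fun y => ?_
    simp [Fin.prod_univ_succ]

lemma prod_one_add_natAbs_rpow_le {d : ℕ} (y : Fin d → ℤ) {p : ℝ} (hp : 0 ≤ p) :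
    ∏ j, (1 + ((y j).natAbs : ℝ)) ^ p ≤ (1 + (l1norm y : ℝ)) ^ (d * p) := by
  calc ∏ j, (1 + ((y j).natAbs : ℝ)) ^ p ≤ ∏ _j : Fin d, (1 + (l1norm y : ℝ)) ^ p := by
        refine Finset.prod_le_prod (fun j _ => by positivity) fun j _ => ?_
        gcongr
        exact_mod_cast Finset.single_le_sum (f := fun i => (y i).natAbs)
          (fun i _ => Nat.zero_le _) (Finset.mem_univ j)
    _ = (1 + (l1norm y : ℝ)) ^ (d * p) := by
        rw [Finset.prod_const, Finset.card_univ, Fintype.card_fin, ← Real.rpow_natCast,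
          ← Real.rpow_mul (by positivity), mul_comm]

lemma Ffun_pos (d : ℕ) {r : ℝ} (hr : 0 ≤ r) : 0 < Ffun d r := by
  unfold Ffun; positivity

lemma Ffun_anti (d : ℕ) {r s : ℝ} (hr : 0 ≤ r) (hrs : r ≤ s) : Ffun d s ≤ Ffun d r := by
  unfold Ffun; gcongr

lemma summable_Ffun_l1norm (d : ℕ) : Summable fun y : Fin d → ℤ => Ffun d (l1norm y) := by
  rcases Nat.eq_zero_or_pos d with rfl | hd
  · exact .of_finite
  -- split the decay `(1 + ‖y‖₁)^{-(d+1)}` evenly among the `d` coordinates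
  set p : ℝ := (d + 1) / d
  have hd' : (0 : ℝ) < d := by exact_mod_cast hd
  have hp : 1 < p := by rw [lt_div_iff₀ hd']; linarith
  have hdp : (d : ℝ) * p = (d + 1 : ℕ) := by push_cast; exact mul_div_cancel₀ _ hd'.ne'
  refine .of_nonneg_of_le (fun y => (Ffun_pos d (by positivity)).le) (fun y => ?_)
    (summable_fin_pi_prod (summable_inv_one_add_natAbs_rpow hp) (fun n => by positivity) d)
  calc Ffun d (l1norm y) = ((1 + (l1norm y : ℝ)) ^ ((d : ℝ) * p))⁻¹ := by
        rw [Ffun, hdp, Real.rpow_natCast]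
    _ ≤ (∏ j, (1 + ((y j).natAbs : ℝ)) ^ p)⁻¹ :=
        inv_anti₀ (by positivity) (prod_one_add_natAbs_rpow_le y (zero_lt_one.trans hp).le)
    _ = ∏ j, ((1 + ((y j).natAbs : ℝ)) ^ p)⁻¹ := by rw [Finset.prod_inv_distrib]

lemma Ffun_mul_le_of_le_add (d : ℕ) {a b c : ℝ} (ha : 0 ≤ a) (hb : 0 ≤ b) (hc : 0 ≤ c)
    (habc : c ≤ a + b) :
    Ffun d a * Ffun d b ≤ 2 ^ d * Ffun d c * (Ffun d a + Ffun d b) := by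
  set A := (1 + a) ^ (d + 1)
  set B := (1 + b) ^ (d + 1)
  set C := (1 + c) ^ (d + 1)
  have hA : 0 < A := by positivity
  have hB : 0 < B := by positivity
  have hC : 0 < C := by positivity
  have hCAB : C ≤ 2 ^ d * (A + B) :=
    calc C ≤ ((1 + a) + (1 + b)) ^ (d + 1) := by simp only [C]; gcongr ?_ ^ _; linarith
      _ ≤ 2 ^ d * (A + B) := by simpa using add_pow_le (by linarith) (by linarith) (d + 1)
  show A⁻¹ * B⁻¹ ≤ 2 ^ d * C⁻¹ * (A⁻¹ + B⁻¹)
  rw [show A⁻¹ * B⁻¹ = (A + B)⁻¹ * (A⁻¹ + B⁻¹) by field_simp; ring]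
  gcongr
  rw [← div_eq_mul_inv, le_div_iff₀ hC, inv_mul_le_iff₀ (by positivity)]
  linarith

lemma InS.mul_le_of_le_add {ζ : ℝ → ℝ} (hζ : InS ζ) {a b c : ℝ} (ha : 0 ≤ a) (hb : 0 ≤ b)
    (hc : 0 ≤ c) (habc : c ≤ a + b) : ζ a * ζ b ≤ ζ c :=
  (hζ.2.2.2.1 a b ha hb).trans (hζ.2.2.1 c _ hc habc)

lemma Fzeta_nonneg (d : ℕ) {ζ : ℝ → ℝ} (hζ : InS ζ) {r : ℝ} (hr : 0 ≤ r) : 0 ≤ Fzeta d ζ r :=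
  mul_nonneg (hζ.1 r hr).le (Ffun_pos d hr).le

lemma Fzeta_mul_le_of_le_add (d : ℕ) {ζ : ℝ → ℝ} (hζ : InS ζ) {a b c : ℝ} (ha : 0 ≤ a)
    (hb : 0 ≤ b) (hc : 0 ≤ c) (habc : c ≤ a + b) :
    Fzeta d ζ a * Fzeta d ζ b ≤ 2 ^ d * Fzeta d ζ c * (Ffun d a + Ffun d b) :=
  calc Fzeta d ζ a * Fzeta d ζ b = (ζ a * ζ b) * (Ffun d a * Ffun d b) := by
        unfold Fzeta Ffun; ring
    _ ≤ ζ c * (2 ^ d * Ffun d c * (Ffun d a + Ffun d b)) :=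
        mul_le_mul (hζ.mul_le_of_le_add ha hb hc habc) (Ffun_mul_le_of_le_add d ha hb hc habc)
          (mul_nonneg (Ffun_pos d ha).le (Ffun_pos d hb).le) (hζ.1 c hc).le
    _ = 2 ^ d * Fzeta d ζ c * (Ffun d a + Ffun d b) := by unfold Fzeta Ffun; ring

section Torus

variable {M d : ℕ}

lemma dTorus_le_dTorusL (ℓ : Fin d → Bool) (l x y : Fin d → ZMod M) :
    dTorus x y ≤ dTorusL ℓ l x y := by
  unfold dTorusL; omega

variable [NeZero M]

lemma torusD_eq_natAbs_valMinAbs (u v : ZMod M) : torusD M u v = (v - u).valMinAbs.natAbs :=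
  (ZMod.valMinAbs_natAbs_eq_min _).symm

lemma torusD_comm (u v : ZMod M) : torusD M u v = torusD M v u := by
  rw [torusD_eq_natAbs_valMinAbs, torusD_eq_natAbs_valMinAbs, ← neg_sub,
    ZMod.natAbs_valMinAbs_neg]

lemma torusD_triangle (u v w : ZMod M) : torusD M u w ≤ torusD M u v + torusD M v w := by
  simp only [torusD_eq_natAbs_valMinAbs]
  calc (w - u).valMinAbs.natAbs = ((v - u) + (w - v)).valMinAbs.natAbs := by
        rw [sub_add_sub_cancel']
    _ ≤ ((v - u).valMinAbs + (w - v).valMinAbs).natAbs := ZMod.natAbs_valMinAbs_add_le _ _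
    _ ≤ (v - u).valMinAbs.natAbs + (w - v).valMinAbs.natAbs := Int.natAbs_add_le _ _

lemma dTorus_comm (x y : Fin d → ZMod M) : dTorus x y = dTorus y x :=
  Finset.sum_congr rfl fun _ _ => torusD_comm _ _

lemma dTorus_triangle (x z y : Fin d → ZMod M) : dTorus x y ≤ dTorus x z + dTorus z y := by
  unfold dTorus
  rw [← Finset.sum_add_distrib]
  exact Finset.sum_le_sum fun _ _ => torusD_triangle _ _ _

lemma dTorusL_triangle (ℓ : Fin d → Bool) (l x z y : Fin d → ZMod M) :
    dTorusL ℓ l x y ≤ dTorusL ℓ l x z + dTorusL ℓ l z y := by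
  have := dTorus_triangle x z y
  unfold dTorusL; omega

lemma l1norm_valMinAbs_sub (x z : Fin d → ZMod M) :
    l1norm (fun j => (z j - x j).valMinAbs) = dTorus x z := by
  simp only [l1norm, dTorus, torusD_eq_natAbs_valMinAbs]

lemma sum_Ffun_dTorus_le (x : Fin d → ZMod M) :
    ∑ z : Fin d → ZMod M, Ffun d (dTorus x z) ≤ FnormGamma d := by
  have hinj : Function.Injective fun (z : Fin d → ZMod M) j => (z j - x j).valMinAbs :=
    fun z z' h => funext fun j => sub_left_injective (ZMod.injective_valMinAbs (congrFun h j))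
  have := tsum_comp_le_tsum_of_inj (summable_Ffun_l1norm d)
    (fun y => (Ffun_pos d (by positivity)).le) hinj
  simpa only [Function.comp_def, l1norm_valMinAbs_sub, tsum_fintype, FnormGamma] using this

lemma Fzeta_dTorusL_mul_le (d : ℕ) {ζ : ℝ → ℝ} (hζ : InS ζ) (ℓ : Fin d → Bool)
    (l x z y : Fin d → ZMod M) :
    Fzeta d ζ (dTorusL ℓ l x z) * Fzeta d ζ (dTorusL ℓ l z y) ≤
      2 ^ d * Fzeta d ζ (dTorusL ℓ l x y) * (Ffun d (dTorus x z) + Ffun d (dTorus y z)) := by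
  have htri : (dTorusL ℓ l x y : ℝ) ≤ dTorusL ℓ l x z + dTorusL ℓ l z y := by
    exact_mod_cast dTorusL_triangle ℓ l x z y
  refine (Fzeta_mul_le_of_le_add d hζ (by positivity) (by positivity) (by positivity)
    htri).trans ?_
  rw [dTorus_comm y z]
  exact mul_le_mul_of_nonneg_left (add_le_add
    (Ffun_anti d (by positivity) (by exact_mod_cast dTorus_le_dTorusL ℓ l x z))
    (Ffun_anti d (by positivity) (by exact_mod_cast dTorus_le_dTorusL ℓ l z y)))
    (mul_nonneg (by positivity) (Fzeta_nonneg d hζ (by positivity)))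

end Torus

theorem statement4 (d : ℕ) (ζ : ℝ → ℝ) (hζ : InS ζ)
    (M : ℕ) [NeZero M]
    (ℓ : Fin d → Bool) (l : Fin d → ZMod M) (x y : Fin d → ZMod M) :
    ∑ z : Fin d → ZMod M, Fzeta d ζ (dTorusL ℓ l x z) * Fzeta d ζ (dTorusL ℓ l z y) ≤
      2 ^ (d + 1) * FnormGamma d * Fzeta d ζ (dTorusL ℓ l x y) := by
  have hc : 0 ≤ 2 ^ d * Fzeta d ζ (dTorusL ℓ l x y) :=
    mul_nonneg (by positivity) (Fzeta_nonneg d hζ (by positivity))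
  calc ∑ z, Fzeta d ζ (dTorusL ℓ l x z) * Fzeta d ζ (dTorusL ℓ l z y)
      ≤ ∑ z, 2 ^ d * Fzeta d ζ (dTorusL ℓ l x y) *
          (Ffun d (dTorus x z) + Ffun d (dTorus y z)) :=
        Finset.sum_le_sum fun z _ => Fzeta_dTorusL_mul_le d hζ ℓ l x z y
    _ = 2 ^ d * Fzeta d ζ (dTorusL ℓ l x y) *
          (∑ z, Ffun d (dTorus x z) + ∑ z, Ffun d (dTorus y z)) := by
        rw [← Finset.mul_sum, Finset.sum_add_distrib]
    _ ≤ 2 ^ d * Fzeta d ζ (dTorusL ℓ l x y) * (FnormGamma d + FnormGamma d) := by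
        gcongr <;> exact sum_Ffun_dTorus_le _
    _ = 2 ^ (d + 1) * FnormGamma d * Fzeta d ζ (dTorusL ℓ l x y) := by ring
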